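/- For every n ≥ 1 and every j < 2^n, the number of minimal puncturing bit patterns for j equals 2 raised to the power Σ_{t=0}^{n−1} (1 − j_t)·2^{d_H(j mod 2^t)}, where j_t is the t-th binary digit of j and d_H denotes the binary Hamming weight; that is, |ψ_j| = 2^{Σ_{t=0}^{n−1} (1 − j_t)·∏_{k=0}^{t−1} 2^{j_k}}. -/

import Mathlib

/-- Binary domination: every binary digit of `i` is at most the corresponding digit of `j`. -/
def bdom (i j : ℕ) : Prop := ∀ t, i.testBit t = true → j.testBit t = true

instance (i j : ℕ) : Decidable (bdom i j) :=
  decidable_of_iff (i ||| j = j) (by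
    constructor
    · intro h t hi
      have h1 : (i ||| j).testBit t = j.testBit t := by rw [h]
      rw [Nat.testBit_or, hi, Bool.true_or] at h1
      exact h1.symm
    · intro h
      apply Nat.eq_of_testBit_eq
      intro t
      rw [Nat.testBit_or]
      cases hi : i.testBit t with
      | true => simp [h t hi]
      | false => simp)

/-- One step of zero-LLR propagation, computing the stage-`t` zero-LLR set from the
stage-`t+1` zero-LLR set `S`, for a polar code of length `2^n`. -/
def zstep (n t : ℕ) (S : Finset ℕ) : Finset ℕ :=
  (Finset.range (2 ^ n)).filter fun i =>
    if i.testBit t then i ∈ S ∧ i - 2 ^ t ∈ S else i ∈ S ∨ i + 2 ^ t ∈ S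

/-- Zero-LLR set at stage `t` for puncturing set `X`, for a polar code of length `2^n`:
`Zstage n X n = X` and `Zstage n X t = zstep n t (Zstage n X (t+1))` for `t < n`. -/
def Zstage (n : ℕ) (X : Finset ℕ) (t : ℕ) : Finset ℕ :=
  if _h : n ≤ t then X else zstep n t (Zstage n X (t + 1))
termination_by n - t
decreasing_by omega

/-- The incapable set resulting from puncturing set `X`. -/
def Up (n : ℕ) (X : Finset ℕ) : Finset ℕ := Zstage n X 0

/-- `psi n j Q`: `Q` is a minimal puncturing bit pattern making bit `j` incapable. -/
def psi (n j : ℕ) (Q : Finset ℕ) : Prop :=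
  Q ⊆ Finset.range (2 ^ n) ∧ j ∈ Up n Q ∧ ∀ Q' ⊂ Q, j ∉ Up n Q'

/-- Binary Hamming weight: the number of ones in the binary representation. -/
def hamw (j : ℕ) : ℕ := (Nat.bits j).count true

/-! Indices `≥ 2^n` never enter the propagation, so `ψ_j` is the set of minimal elements of
`{Q | j ∈ U_p(Q)}`. Split a puncturing set `Q` into its even part and its odd part. The stages
`t ≥ 1` act on the two parts separately, as two copies of the code of length `2^(n-1)`, and
stage `0` merges them: `2i` is incapable iff `i` is incapable for one of the parts, `2i+1` iff for
both. So a minimal pattern for `2i` is a minimal pattern for `i` placed in one of the two parts,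
and a minimal pattern for `2i+1` is an arbitrary pair of minimal patterns for `i`; hence
`|ψ_{2i}| = 2|ψ_i|` and `|ψ_{2i+1}| = |ψ_i|^2`, which is the recursion satisfied by the
exponent. -/

open Finset

section MinimalProd

variable {α β : Type*} {P : α → Prop} {R : β → Prop}

theorem minimal_prod_and_iff [Preorder α] [Preorder β] {a : α} {b : β} :
    Minimal (fun q : α × β => P q.1 ∧ R q.2) (a, b) ↔ Minimal P a ∧ Minimal R b := by
  constructor
  · rintro ⟨⟨ha, hb⟩, hmin⟩
    exact ⟨⟨ha, fun a' ha' hle => (hmin (y := (a', b)) ⟨ha', hb⟩ ⟨hle, le_rfl⟩).1⟩,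
      ⟨hb, fun b' hb' hle => (hmin (y := (a, b')) ⟨ha, hb'⟩ ⟨le_rfl, hle⟩).2⟩⟩
  · rintro ⟨ha, hb⟩
    exact ⟨⟨ha.prop, hb.prop⟩, fun q hq hle => ⟨ha.2 hq.1 hle.1, hb.2 hq.2 hle.2⟩⟩

theorem minimal_prod_or_iff [PartialOrder α] [PartialOrder β] [OrderBot α] [OrderBot β]
    (hP : ¬P ⊥) (hR : ¬R ⊥) {a : α} {b : β} :
    Minimal (fun q : α × β => P q.1 ∨ R q.2) (a, b) ↔
      (Minimal P a ∧ b = ⊥) ∨ (a = ⊥ ∧ Minimal R b) := by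
  constructor
  · rintro ⟨ha | hb, hmin⟩
    · refine .inl ⟨⟨ha, fun a' ha' hle =>
        (hmin (y := (a', ⊥)) (.inl ha') ⟨hle, bot_le⟩).1⟩, ?_⟩
      exact le_bot_iff.1 (hmin (y := (a, ⊥)) (.inl ha) ⟨le_rfl, bot_le⟩).2
    · refine .inr ⟨?_, ⟨hb, fun b' hb' hle =>
        (hmin (y := (⊥, b')) (.inr hb') ⟨bot_le, hle⟩).2⟩⟩
      exact le_bot_iff.1 (hmin (y := (⊥, b)) (.inr hb) ⟨bot_le, le_rfl⟩).1
  · rintro (⟨ha, rfl⟩ | ⟨rfl, hb⟩)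
    · refine ⟨.inl ha.prop, fun q hq hle => ⟨?_, bot_le⟩⟩
      rcases hq with hq | hq
      · exact ha.2 hq hle.1
      · exact absurd (le_bot_iff.1 hle.2 ▸ hq) hR
    · refine ⟨.inr hb.prop, fun q hq hle => ⟨bot_le, ?_⟩⟩
      rcases hq with hq | hq
      · exact absurd (le_bot_iff.1 hle.1 ▸ hq) hP
      · exact hb.2 hq hle.2

theorem ncard_setOf_minimal_prod_and [Preorder α] [Preorder β] :
    {q : α × β | Minimal (fun q => P q.1 ∧ R q.2) q}.ncard =
      {a | Minimal P a}.ncard * {b | Minimal R b}.ncard := by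
  rw [← Set.ncard_prod]
  congr 1
  ext ⟨a, b⟩
  exact minimal_prod_and_iff

theorem ncard_setOf_minimal_prod_or [PartialOrder α] [PartialOrder β] [OrderBot α] [OrderBot β]
    (hP : ¬P ⊥) (hR : ¬R ⊥) (hPfin : {a | Minimal P a}.Finite)
    (hRfin : {b | Minimal R b}.Finite) :
    {q : α × β | Minimal (fun q => P q.1 ∨ R q.2) q}.ncard =
      {a | Minimal P a}.ncard + {b | Minimal R b}.ncard := by
  have hsplit : {q : α × β | Minimal (fun q => P q.1 ∨ R q.2) q} =
      {a | Minimal P a} ×ˢ {⊥} ∪ {⊥} ×ˢ {b | Minimal R b} := by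
    ext ⟨a, b⟩
    simp [minimal_prod_or_iff hP hR]
  have hdisj : Disjoint ({a | Minimal P a} ×ˢ {⊥}) ({⊥} ×ˢ {b | Minimal R b}) := by
    rw [Set.disjoint_left]
    rintro ⟨a, b⟩ ⟨ha, -⟩ ⟨rfl, -⟩
    exact hP ha.prop
  rw [hsplit, Set.ncard_union_eq hdisj (hPfin.prod (Set.finite_singleton _))
    ((Set.finite_singleton _).prod hRfin), Set.ncard_prod, Set.ncard_prod]
  simp

end MinimalProd

theorem OrderIso.ncard_setOf_minimal {α β : Type*} [Preorder α] [Preorder β] (e : α ≃o β)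
    (P : α → Prop) :
    {x | Minimal P x}.ncard = {y | Minimal (fun y => P (e.symm y)) y}.ncard := by
  rw [← e.image_setOfPred_minimal, Set.ncard_image_of_injective _ e.injective]

theorem Finset.minimal_mem_iff_eq_singleton {α : Type*} {a : α} {s : Finset α} :
    Minimal (a ∈ ·) s ↔ s = {a} := by
  constructor
  · intro h
    exact le_antisymm (h.2 (mem_singleton_self a) (singleton_subset_iff.2 h.prop))
      (singleton_subset_iff.2 h.prop)
  · rintro rfl
    exact ⟨mem_singleton_self a, fun s hs _ => singleton_subset_iff.2 hs⟩

theorem add_two_pow_lt_two_pow {i t n : ℕ} (hi : i < 2 ^ n) (ht : t < n)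
    (hbit : i.testBit t = false) : i + 2 ^ t < 2 ^ n := by
  obtain ⟨m, rfl⟩ := Nat.exists_eq_add_of_lt ht
  set q := i / 2 ^ t
  have hq : q % 2 = 0 := by
    simpa [Nat.testBit_eq_decide_div_mod_eq] using hbit
  have hpow : 2 ^ (t + m + 1) = 2 ^ t * (2 * 2 ^ m) := by ring
  have hlt : q < 2 * 2 ^ m := by
    rw [Nat.div_lt_iff_lt_mul (Nat.two_pow_pos t)]; linarith
  have hq2 : q + 2 ≤ 2 * 2 ^ m := by omega
  have hsucc : i < 2 ^ t * (q + 1) := Nat.lt_mul_div_succ i (Nat.two_pow_pos t)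
  rw [hpow]
  nlinarith [Nat.two_pow_pos t]

theorem hamw_eq_mod_two_add_hamw_div_two (x : ℕ) : hamw x = x % 2 + hamw (x / 2) := by
  rcases Nat.even_or_odd' x with ⟨k, rfl | rfl⟩
  · rcases Nat.eq_zero_or_pos k with rfl | hk
    · rfl
    · rw [hamw, hamw, Nat.bit0_bits k hk.ne']
      simp
  · rw [hamw, hamw, Nat.bit1_bits k, show (2 * k + 1) / 2 = k by omega]
    simp [add_comm]

theorem hamw_mod_two_pow_succ (x t : ℕ) :
    hamw (x % 2 ^ (t + 1)) = x % 2 + hamw (x / 2 % 2 ^ t) := by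
  rw [hamw_eq_mod_two_add_hamw_div_two, pow_succ', Nat.mod_mul_right_div_self,
    Nat.mod_mul_right_mod]

section ZeroLLR

variable {n : ℕ}

theorem Zstage_of_le {t : ℕ} (X : Finset ℕ) (h : n ≤ t) : Zstage n X t = X := by
  rw [Zstage, dif_pos h]

theorem Zstage_of_lt {t : ℕ} (X : Finset ℕ) (h : t < n) :
    Zstage n X t = zstep n t (Zstage n X (t + 1)) := by
  rw [Zstage, dif_neg (not_le.2 h)]

theorem Up_zero (X : Finset ℕ) : Up 0 X = X :=
  Zstage_of_le X le_rfl

theorem mem_zstep {t i : ℕ} {S : Finset ℕ} :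
    i ∈ zstep n t S ↔ i < 2 ^ n ∧
      if i.testBit t then i ∈ S ∧ i - 2 ^ t ∈ S else i ∈ S ∨ i + 2 ^ t ∈ S := by
  simp only [zstep, mem_filter, mem_range]

theorem zstep_subset_range (t : ℕ) (S : Finset ℕ) : zstep n t S ⊆ range (2 ^ n) :=
  filter_subset _ _

theorem zstep_empty (t : ℕ) : zstep n t ∅ = ∅ := by
  ext i
  simp [mem_zstep]

theorem not_mem_Up_empty (j : ℕ) : j ∉ Up n ∅ := by
  suffices ∀ t, Zstage n ∅ t = ∅ by simp [Up, this]
  intro t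
  induction t using Zstage.induct n with
  | case1 t ht => exact Zstage_of_le _ ht
  | case2 t ht ih => rw [Zstage_of_lt _ (not_le.1 ht), ih, zstep_empty]

theorem zstep_inter_range {t : ℕ} (ht : t < n) (S : Finset ℕ) :
    zstep n t (S ∩ range (2 ^ n)) = zstep n t S := by
  ext i
  simp only [mem_zstep, mem_inter, mem_range]
  refine and_congr_right fun hi => ?_
  cases hbit : i.testBit t
  · simp [hi, add_two_pow_lt_two_pow hi ht hbit]
  · simp [hi, (Nat.sub_le i _).trans_lt hi]

theorem Up_inter_range (X : Finset ℕ) :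
    Up n (X ∩ range (2 ^ n)) = Up n X ∩ range (2 ^ n) := by
  suffices ∀ t, Zstage n (X ∩ range (2 ^ n)) t = Zstage n X t ∩ range (2 ^ n) from this 0
  intro t
  induction t using Zstage.induct n with
  | case1 t ht => rw [Zstage_of_le _ ht, Zstage_of_le _ ht]
  | case2 t ht ih =>
    rw [Zstage_of_lt _ (not_le.1 ht), Zstage_of_lt _ (not_le.1 ht), ih,
      zstep_inter_range (not_le.1 ht), inter_eq_left.2 (zstep_subset_range _ _)]

theorem Minimal.subset_range_of_mem_Up {j : ℕ} {Q : Finset ℕ} (hQ : Minimal (j ∈ Up n ·) Q)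
    (hj : j < 2 ^ n) : Q ⊆ range (2 ^ n) := by
  have hj' : j ∈ Up n (Q ∩ range (2 ^ n)) := by
    rw [Up_inter_range]
    exact mem_inter.2 ⟨hQ.prop, mem_range.2 hj⟩
  exact (hQ.2 hj' inter_subset_left).trans inter_subset_right

theorem psi_iff_minimal {j : ℕ} {Q : Finset ℕ} (hj : j < 2 ^ n) :
    psi n j Q ↔ Minimal (j ∈ Up n ·) Q := by
  rw [minimal_iff_forall_lt]
  exact ⟨fun h => h.2, fun h => ⟨(minimal_iff_forall_lt.2 h).subset_range_of_mem_Up hj, h⟩⟩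

theorem finite_setOf_minimal_mem_Up {j : ℕ} (hj : j < 2 ^ n) :
    {Q | Minimal (j ∈ Up n ·) Q}.Finite :=
  (range (2 ^ n)).powerset.finite_toSet.subset fun _ hQ =>
    mem_powerset.2 (Minimal.subset_range_of_mem_Up hQ hj)

end ZeroLLR

noncomputable def digitPart (r : ℕ) (Q : Finset ℕ) : Finset ℕ :=
  Q.preimage (fun k => 2 * k + r) fun _ _ _ _ h => by simpa using h

@[simp]
theorem mem_digitPart {r k : ℕ} {Q : Finset ℕ} : k ∈ digitPart r Q ↔ 2 * k + r ∈ Q :=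
  mem_preimage

theorem digitPart_mono (r : ℕ) : Monotone (digitPart r) :=
  fun _ _ h _ hk => mem_digitPart.2 (h (mem_digitPart.1 hk))

def interleave (A B : Finset ℕ) : Finset ℕ :=
  A.image (2 * ·) ∪ B.image (2 * · + 1)

theorem interleave_mono {A A' B B' : Finset ℕ} (hA : A ⊆ A') (hB : B ⊆ B') :
    interleave A B ⊆ interleave A' B' :=
  union_subset_union (image_subset_image hA) (image_subset_image hB)

theorem digitPart_zero_interleave (A B : Finset ℕ) : digitPart 0 (interleave A B) = A := by
  ext k
  simp only [interleave, mem_digitPart, mem_union, mem_image]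
  constructor
  · rintro (⟨a, ha, h⟩ | ⟨a, -, h⟩)
    · rwa [show k = a by omega]
    · omega
  · exact fun hk => .inl ⟨k, hk, rfl⟩

theorem digitPart_one_interleave (A B : Finset ℕ) : digitPart 1 (interleave A B) = B := by
  ext k
  simp only [interleave, mem_digitPart, mem_union, mem_image]
  constructor
  · rintro (⟨a, -, h⟩ | ⟨a, ha, h⟩)
    · omega
    · rwa [show k = a by omega]
  · exact fun hk => .inr ⟨k, hk, rfl⟩

theorem interleave_digitPart (Q : Finset ℕ) : interleave (digitPart 0 Q) (digitPart 1 Q) = Q := by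
  ext x
  simp only [interleave, mem_union, mem_image, mem_digitPart]
  constructor
  · rintro (⟨k, hk, rfl⟩ | ⟨k, hk, rfl⟩) <;> exact hk
  · intro hx
    rcases Nat.even_or_odd' x with ⟨k, rfl | rfl⟩
    · exact .inl ⟨k, hx, rfl⟩
    · exact .inr ⟨k, hx, rfl⟩

noncomputable def digitSplit : Finset ℕ ≃o Finset ℕ × Finset ℕ where
  toFun Q := (digitPart 0 Q, digitPart 1 Q)
  invFun p := interleave p.1 p.2
  left_inv := interleave_digitPart
  right_inv p := Prod.ext (digitPart_zero_interleave _ _) (digitPart_one_interleave _ _)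
  map_rel_iff' {Q Q'} := by
    refine ⟨fun h => ?_, fun h => ⟨digitPart_mono 0 h, digitPart_mono 1 h⟩⟩
    rw [← interleave_digitPart Q, ← interleave_digitPart Q']
    exact interleave_mono h.1 h.2

theorem digitSplit_symm_apply (p : Finset ℕ × Finset ℕ) :
    digitSplit.symm p = interleave p.1 p.2 :=
  rfl

theorem digitPart_zstep {n r : ℕ} (hr : r < 2) (t : ℕ) (S : Finset ℕ) :
    digitPart r (zstep (n + 1) (t + 1) S) = zstep n t (digitPart r S) := by
  ext i
  have hbit : (2 * i + r).testBit (t + 1) = i.testBit t := by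
    rw [Nat.testBit_add_one, show (2 * i + r) / 2 = i by omega]
  simp only [mem_digitPart, mem_zstep, hbit, pow_succ']
  refine and_congr (by omega) ?_
  split_ifs with h
  · have := Nat.ge_two_pow_of_testBit h
    rw [show 2 * i + r - 2 * 2 ^ t = 2 * (i - 2 ^ t) + r by omega]
  · rw [show 2 * i + r + 2 * 2 ^ t = 2 * (i + 2 ^ t) + r by omega]

theorem two_mul_add_mem_Zstage_one {n r i : ℕ} (hr : r < 2) (X : Finset ℕ) :
    2 * i + r ∈ Zstage (n + 1) X 1 ↔ i ∈ Up n (digitPart r X) := by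
  suffices ∀ t, digitPart r (Zstage (n + 1) X (t + 1)) = Zstage n (digitPart r X) t by
    rw [Up, ← this, mem_digitPart]
  intro t
  induction t using Zstage.induct n with
  | case1 t ht => rw [Zstage_of_le _ (by omega), Zstage_of_le _ ht]
  | case2 t ht ih =>
    rw [Zstage_of_lt _ (by omega), Zstage_of_lt _ (not_le.1 ht), digitPart_zstep hr, ih]

theorem two_mul_mem_Up_succ {n i : ℕ} (hi : i < 2 ^ n) (X : Finset ℕ) :
    2 * i ∈ Up (n + 1) X ↔ i ∈ Up n (digitPart 0 X) ∨ i ∈ Up n (digitPart 1 X) := by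
  have hbit : (2 * i).testBit 0 = false := by simp [Nat.testBit_zero]
  have hlt : 2 * i < 2 ^ (n + 1) := by rw [pow_succ']; omega
  have h0 := two_mul_add_mem_Zstage_one (n := n) (i := i) (by norm_num : 0 < 2) X
  have h1 := two_mul_add_mem_Zstage_one (n := n) (i := i) (by norm_num : 1 < 2) X
  rw [add_zero] at h0
  rw [Up, Zstage_of_lt X (Nat.zero_lt_succ n), mem_zstep, hbit, if_neg Bool.false_ne_true,
    pow_zero, zero_add, h0, h1]
  exact and_iff_right hlt

theorem two_mul_add_one_mem_Up_succ {n i : ℕ} (hi : i < 2 ^ n) (X : Finset ℕ) :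
    2 * i + 1 ∈ Up (n + 1) X ↔ i ∈ Up n (digitPart 0 X) ∧ i ∈ Up n (digitPart 1 X) := by
  have hbit : (2 * i + 1).testBit 0 = true := by simp [Nat.testBit_zero]
  have hlt : 2 * i + 1 < 2 ^ (n + 1) := by rw [pow_succ']; omega
  have h0 := two_mul_add_mem_Zstage_one (n := n) (i := i) (by norm_num : 0 < 2) X
  have h1 := two_mul_add_mem_Zstage_one (n := n) (i := i) (by norm_num : 1 < 2) X
  rw [add_zero] at h0
  rw [Up, Zstage_of_lt X (Nat.zero_lt_succ n), mem_zstep, hbit, if_pos rfl, pow_zero,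
    Nat.add_sub_cancel, zero_add, h0, h1]
  exact (and_iff_right hlt).trans and_comm

theorem ncard_setOf_minimal_two_mul_mem_Up {n i : ℕ} (hi : i < 2 ^ n) :
    {Q | Minimal (2 * i ∈ Up (n + 1) ·) Q}.ncard =
      2 * {A | Minimal (i ∈ Up n ·) A}.ncard := by
  have hsplit : (fun p => 2 * i ∈ Up (n + 1) (digitSplit.symm p)) =
      fun p => i ∈ Up n p.1 ∨ i ∈ Up n p.2 := by
    funext p
    rw [digitSplit_symm_apply, two_mul_mem_Up_succ hi, digitPart_zero_interleave,
      digitPart_one_interleave]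
  rw [digitSplit.ncard_setOf_minimal, hsplit,
    ncard_setOf_minimal_prod_or (not_mem_Up_empty i) (not_mem_Up_empty i)
      (finite_setOf_minimal_mem_Up hi) (finite_setOf_minimal_mem_Up hi), two_mul]

theorem ncard_setOf_minimal_two_mul_add_one_mem_Up {n i : ℕ} (hi : i < 2 ^ n) :
    {Q | Minimal (2 * i + 1 ∈ Up (n + 1) ·) Q}.ncard =
      {A | Minimal (i ∈ Up n ·) A}.ncard ^ 2 := by
  have hsplit : (fun p => 2 * i + 1 ∈ Up (n + 1) (digitSplit.symm p)) =
      fun p => i ∈ Up n p.1 ∧ i ∈ Up n p.2 := by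
    funext p
    rw [digitSplit_symm_apply, two_mul_add_one_mem_Up_succ hi, digitPart_zero_interleave,
      digitPart_one_interleave]
  rw [digitSplit.ncard_setOf_minimal, hsplit,
    ncard_setOf_minimal_prod_and (P := (i ∈ Up n ·)) (R := (i ∈ Up n ·)), sq]

def patternExponent (n j : ℕ) : ℕ :=
  ∑ t ∈ range n, (1 - (if j.testBit t then 1 else 0)) * 2 ^ hamw (j % 2 ^ t)

theorem patternExponent_zero (j : ℕ) : patternExponent 0 j = 0 :=
  sum_range_zero _

theorem patternExponent_succ (n j : ℕ) :
    patternExponent (n + 1) j = (1 - j % 2) + 2 ^ (j % 2) * patternExponent n (j / 2) := by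
  rw [patternExponent, sum_range_succ', patternExponent, mul_sum, add_comm]
  congr 1
  · have : hamw 0 = 0 := rfl
    rcases Nat.mod_two_eq_zero_or_one j with h | h <;> simp [Nat.testBit_zero, h, Nat.mod_one, this]
  · refine sum_congr rfl fun t _ => ?_
    rw [Nat.testBit_add_one, hamw_mod_two_pow_succ, pow_add]
    ring

theorem ncard_setOf_minimal_mem_Up :
    ∀ (n j : ℕ), j < 2 ^ n → {Q | Minimal (j ∈ Up n ·) Q}.ncard = 2 ^ patternExponent n j
  | 0, j, hj => by
    obtain rfl : j = 0 := by simpa using hj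
    simp [Up_zero, Finset.minimal_mem_iff_eq_singleton, patternExponent_zero]
  | n + 1, j, hj => by
    have hpow : 2 ^ (n + 1) = 2 * 2 ^ n := pow_succ' 2 n
    obtain ⟨i, rfl | rfl⟩ := Nat.even_or_odd' j
    · rw [ncard_setOf_minimal_two_mul_mem_Up (by omega), ncard_setOf_minimal_mem_Up n i (by omega),
        patternExponent_succ, show 2 * i % 2 = 0 by omega, show 2 * i / 2 = i by omega]
      ring
    · rw [ncard_setOf_minimal_two_mul_add_one_mem_Up (by omega),
        ncard_setOf_minimal_mem_Up n i (by omega), patternExponent_succ,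
        show (2 * i + 1) % 2 = 1 by omega, show (2 * i + 1) / 2 = i by omega]
      ring

theorem minimal_pattern_count_general (n : ℕ) (j : ℕ) (hj : j < 2 ^ n) :
    {Q : Finset ℕ | psi n j Q}.ncard
      = 2 ^ (∑ t ∈ Finset.range n,
          (1 - (if j.testBit t then 1 else 0)) * 2 ^ hamw (j % 2 ^ t)) := by
  have hpsi : {Q | psi n j Q} = {Q | Minimal (j ∈ Up n ·) Q} :=
    Set.ext fun _ => psi_iff_minimal hj
  rw [hpsi]
  exact ncard_setOf_minimal_mem_Up n j hj

/-- the number of minimal puncturing bit patterns for `j` equals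
`2^{Σ_{t<n} (1 − j_t)·2^{d_H(j mod 2^t)}}`. -/
theorem minimal_pattern_count (n : ℕ) (hn : 1 ≤ n) (j : ℕ) (hj : j < 2 ^ n) :
    {Q : Finset ℕ | psi n j Q}.ncard
      = 2 ^ (∑ t ∈ Finset.range n,
          (1 - (if j.testBit t then 1 else 0)) * 2 ^ hamw (j % 2 ^ t)) :=
  minimal_pattern_count_general n j hj
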